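/- Soft-thresholding beats the parameter-free baseline: let ε ∈ (0, √(2/π)], let γ ∈ ℝ satisfy ∫_{−∞}^{ε−γ} Φ(x) dx = ε/2, and let y > 0 satisfy (2/√π)·∫_0^y exp(t²) dt = √2/(√π·ε). Then γ − ε < √2·y. In particular, the key inequality (2/√π)·(∫_0^z exp(t²) dt)·∫_{−∞}^{−√2·z} Φ(x) dx < √(2/π) holds for all z > 0. -/

import Mathlib

/-!
Integrating by parts with `Φ' = φ` and `φ'(x) = -x φ(x)` gives
`∫_{-∞}^a Φ = a Φ(a) + φ(a)`, which is `< φ(a)` for `a < 0`; the boundary terms vanish by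
the Mills-type bound `-a Φ(a) ≤ φ(a)`. On the other side `erfi z ≤ exp (z ^ 2)`, since
`∫_0^z exp (t ^ 2) ≤ (√π / 2) exp (z ^ 2)`: bound the integrand by `exp (c ^ 2)` up to
`c = √π / 2` and by `(t / c) exp (t ^ 2)` beyond it, which works because `2 c ^ 2 ≥ 1`.
At `a = -√2 z` we have `φ(a) = exp (-z ^ 2) / √(2π)`, so the product is `< 1 / √(2π)`,
half of `√(2/π)`. If `γ - ε ≥ √2 y`, monotonicity of `a ↦ ∫_{-∞}^a Φ` and the defining
equations of `γ` and `y` would give the reverse inequality at `z = y`.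
-/

open MeasureTheory ProbabilityTheory Real Set Filter Topology

noncomputable def stdNormalCDF (x : ℝ) : ℝ := ((gaussianReal 0 1) (Set.Iic x)).toReal

noncomputable def erfi (y : ℝ) : ℝ :=
  2 / Real.sqrt Real.pi * ∫ t in (0 : ℝ)..y, Real.exp (t ^ 2)

local notation "φ" => gaussianPDFReal 0 1
local notation "Φ" => stdNormalCDF

lemma gaussianPDFReal_zero_one : φ = fun x => (√(2 * π))⁻¹ * exp (-x ^ 2 / 2) := by
  ext x
  simp [gaussianPDFReal]

lemma continuous_gaussianPDFReal_zero_one : Continuous φ := by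
  rw [gaussianPDFReal_zero_one]
  fun_prop

lemma hasDerivAt_gaussianPDFReal_zero_one (x : ℝ) : HasDerivAt φ (-x * φ x) x := by
  have hexponent : HasDerivAt (fun t => -t ^ 2 / 2) (-x) x :=
    ((hasDerivAt_pow 2 x).fun_neg.div_const 2).congr_deriv (by ring)
  simp only [gaussianPDFReal_zero_one]
  exact (hexponent.exp.const_mul _).congr_deriv (by ring)

lemma integrable_neg_mul_gaussianPDFReal_zero_one : Integrable fun x => -x * φ x := by
  simp only [gaussianPDFReal_zero_one]
  convert (integrable_mul_exp_neg_mul_sq (b := 1 / 2) one_half_pos).const_mul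
    (-(√(2 * π))⁻¹) using 2 with x
  ring_nf

lemma tendsto_gaussianPDFReal_zero_one_atBot : Tendsto φ atBot (𝓝 0) :=
  tendsto_zero_of_hasDerivAt_of_integrableOn_Iic (a := 0)
    (fun x _ => hasDerivAt_gaussianPDFReal_zero_one x)
    integrable_neg_mul_gaussianPDFReal_zero_one.integrableOn
    (integrable_gaussianPDFReal 0 1).integrableOn

lemma integral_Iic_neg_mul_gaussianPDFReal_zero_one (a : ℝ) :
    ∫ t in Iic a, -t * φ t = φ a := by
  rw [integral_Iic_of_hasDerivAt_of_tendsto' (fun x _ => hasDerivAt_gaussianPDFReal_zero_one x)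
    integrable_neg_mul_gaussianPDFReal_zero_one.integrableOn
    tendsto_gaussianPDFReal_zero_one_atBot, sub_zero]

lemma stdNormalCDF_eq_integral (x : ℝ) : Φ x = ∫ t in Iic x, φ t := by
  rw [stdNormalCDF, gaussianReal_apply_eq_integral 0 one_ne_zero, ENNReal.toReal_ofReal
    (setIntegral_nonneg measurableSet_Iic fun t _ => gaussianPDFReal_nonneg 0 1 t)]

lemma stdNormalCDF_pos (x : ℝ) : 0 < Φ x := by
  have hsupp : Function.support φ = univ :=
    eq_univ_of_forall fun t => (gaussianPDFReal_pos 0 1 t one_ne_zero).ne'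
  rw [stdNormalCDF_eq_integral, setIntegral_pos_iff_support_of_nonneg_ae
    (Eventually.of_forall (gaussianPDFReal_nonneg 0 1))
    (integrable_gaussianPDFReal 0 1).integrableOn, hsupp, univ_inter, volume_Iic]
  exact ENNReal.zero_lt_top

lemma hasDerivAt_stdNormalCDF (x : ℝ) : HasDerivAt Φ (φ x) x := by
  have hφ := integrable_gaussianPDFReal 0 1
  have hΦ : Φ = fun u => Φ 0 + ∫ t in (0 : ℝ)..u, φ t := by
    ext u
    rw [stdNormalCDF_eq_integral, stdNormalCDF_eq_integral,
      ← intervalIntegral.integral_Iic_sub_Iic hφ.integrableOn hφ.integrableOn, add_sub_cancel]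
  rw [hΦ]
  exact (intervalIntegral.integral_hasDerivAt_right hφ.intervalIntegrable
    (stronglyMeasurable_gaussianPDFReal 0 1).stronglyMeasurableAtFilter
    continuous_gaussianPDFReal_zero_one.continuousAt).const_add _

lemma continuous_stdNormalCDF : Continuous Φ :=
  continuous_iff_continuousAt.2 fun x => (hasDerivAt_stdNormalCDF x).continuousAt

lemma neg_mul_stdNormalCDF_le (a : ℝ) : -a * Φ a ≤ φ a := by
  rw [stdNormalCDF_eq_integral, ← integral_const_mul,
    ← integral_Iic_neg_mul_gaussianPDFReal_zero_one a]
  refine setIntegral_mono_on ((integrable_gaussianPDFReal 0 1).integrableOn.const_mul _)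
    integrable_neg_mul_gaussianPDFReal_zero_one.integrableOn measurableSet_Iic fun t ht => ?_
  exact mul_le_mul_of_nonneg_right (neg_le_neg ht) (gaussianPDFReal_nonneg 0 1 t)

lemma tendsto_mul_stdNormalCDF_atBot : Tendsto (fun x => x * Φ x) atBot (𝓝 0) := by
  have hφ : Tendsto (fun x => -φ x) atBot (𝓝 0) := by
    simpa using tendsto_gaussianPDFReal_zero_one_atBot.neg
  refine tendsto_of_tendsto_of_tendsto_of_le_of_le' hφ tendsto_const_nhds
    (Eventually.of_forall fun x => by linarith [neg_mul_stdNormalCDF_le x]) ?_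
  filter_upwards [eventually_le_atBot 0] with x hx
  exact mul_nonpos_of_nonpos_of_nonneg hx (stdNormalCDF_pos x).le

lemma integrableOn_Iic_stdNormalCDF (a : ℝ) : IntegrableOn Φ (Iic a) := by
  have htail : IntegrableOn Φ (Iic (-1)) := by
    refine (integrable_gaussianPDFReal 0 1).integrableOn.mono'
      continuous_stdNormalCDF.aestronglyMeasurable ?_
    filter_upwards [ae_restrict_mem measurableSet_Iic] with x (hx : x ≤ -1)
    rw [norm_of_nonneg (stdNormalCDF_pos x).le]
    nlinarith [neg_mul_stdNormalCDF_le x, stdNormalCDF_pos x]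
  exact (htail.union continuous_stdNormalCDF.integrableOn_Icc).mono_set
    fun x (hx : x ≤ a) => (le_total x (-1)).imp id fun h => ⟨h, hx⟩

lemma integral_Iic_stdNormalCDF (a : ℝ) : ∫ x in Iic a, Φ x = a * Φ a + φ a := by
  have hderiv (x : ℝ) : HasDerivAt (fun x => x * Φ x + φ x) (Φ x) x := by
    refine (((hasDerivAt_id' x).mul (hasDerivAt_stdNormalCDF x)).add
      (hasDerivAt_gaussianPDFReal_zero_one x)).congr_deriv ?_
    ring
  rw [integral_Iic_of_hasDerivAt_of_tendsto' (fun x _ => hderiv x)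
    (integrableOn_Iic_stdNormalCDF a)
    (by simpa using tendsto_mul_stdNormalCDF_atBot.add tendsto_gaussianPDFReal_zero_one_atBot),
    sub_zero]

lemma integral_Iic_stdNormalCDF_lt {a : ℝ} (ha : a < 0) : ∫ x in Iic a, Φ x < φ a := by
  rw [integral_Iic_stdNormalCDF]
  linarith [mul_neg_of_neg_of_pos ha (stdNormalCDF_pos a)]

lemma monotone_integral_Iic_stdNormalCDF : Monotone fun a => ∫ x in Iic a, Φ x :=
  fun _ b hab => setIntegral_mono_set (integrableOn_Iic_stdNormalCDF b)
    (Eventually.of_forall fun x => (stdNormalCDF_pos x).le) (Iic_subset_Iic.2 hab).eventuallyLE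

lemma intervalIntegrable_exp_sq (a b : ℝ) :
    IntervalIntegrable (fun t => exp (t ^ 2)) volume a b :=
  (by fun_prop : Continuous fun t : ℝ => exp (t ^ 2)).intervalIntegrable a b

lemma integral_exp_sq_le_mul_exp_sq {z : ℝ} (hz : 0 ≤ z) :
    ∫ t in (0 : ℝ)..z, exp (t ^ 2) ≤ z * exp (z ^ 2) := by
  simpa using intervalIntegral.integral_mono_on hz (intervalIntegrable_exp_sq 0 z)
    intervalIntegrable_const fun t ht => exp_le_exp.2 (pow_le_pow_left₀ ht.1 ht.2 2)

lemma integral_exp_sq_le_of_le {c z : ℝ} (hc : 0 < c) (hcz : c ≤ z) :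
    ∫ t in c..z, exp (t ^ 2) ≤ (exp (z ^ 2) - exp (c ^ 2)) / (2 * c) := by
  have hcont : Continuous fun t : ℝ => 2 * t * exp (t ^ 2) := by fun_prop
  have hftc : ∫ t in c..z, 2 * t * exp (t ^ 2) = exp (z ^ 2) - exp (c ^ 2) :=
    intervalIntegral.integral_eq_sub_of_hasDerivAt
      (fun t _ => by simpa [mul_comm] using (hasDerivAt_pow 2 t).exp) (hcont.intervalIntegrable _ _)
  rw [← hftc, le_div_iff₀ (by positivity), ← intervalIntegral.integral_mul_const]
  refine intervalIntegral.integral_mono_on hcz ((intervalIntegrable_exp_sq c z).mul_const _)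
    (hcont.intervalIntegrable _ _) fun t ht => ?_
  nlinarith [exp_pos (t ^ 2), ht.1]

lemma integral_exp_sq_le {c z : ℝ} (hc₀ : 0 < c) (hc : 1 ≤ 2 * c ^ 2) (hz : 0 ≤ z) :
    ∫ t in (0 : ℝ)..z, exp (t ^ 2) ≤ c * exp (z ^ 2) := by
  rcases le_total z c with hzc | hcz
  · exact (integral_exp_sq_le_mul_exp_sq hz).trans (by gcongr)
  have hexp : exp (c ^ 2) ≤ exp (z ^ 2) := by gcongr
  have htail : (exp (z ^ 2) - exp (c ^ 2)) / (2 * c) ≤ c * (exp (z ^ 2) - exp (c ^ 2)) := by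
    rw [div_le_iff₀ (by positivity)]
    nlinarith [mul_le_mul_of_nonneg_right hc (sub_nonneg.2 hexp)]
  rw [← intervalIntegral.integral_add_adjacent_intervals (intervalIntegrable_exp_sq 0 c)
    (intervalIntegrable_exp_sq c z)]
  linarith [integral_exp_sq_le_mul_exp_sq hc₀.le, integral_exp_sq_le_of_le hc₀ hcz]

lemma erfi_le_exp_sq {z : ℝ} (hz : 0 ≤ z) : erfi z ≤ exp (z ^ 2) := by
  have hc : 1 ≤ 2 * (√π / 2) ^ 2 := by
    rw [div_pow, sq_sqrt pi_pos.le]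
    linarith [pi_gt_three]
  calc erfi z ≤ 2 / √π * (√π / 2 * exp (z ^ 2)) := by
        unfold erfi
        gcongr
        exact integral_exp_sq_le (by positivity) hc hz
    _ = exp (z ^ 2) := by field_simp

lemma erfi_pos {z : ℝ} (hz : 0 < z) : 0 < erfi z := by
  have := intervalIntegral.intervalIntegral_pos_of_pos (intervalIntegrable_exp_sq 0 z)
    (fun t => exp_pos _) hz
  unfold erfi
  positivity

lemma erfi_mul_integral_Iic_stdNormalCDF_lt {z : ℝ} (hz : 0 < z) :
    erfi z * ∫ x in Iic (-(√2 * z)), Φ x < (√(2 * π))⁻¹ := by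
  have hφ : φ (-(√2 * z)) = (√(2 * π))⁻¹ * exp (-z ^ 2) := by
    simp only [gaussianPDFReal_zero_one, neg_sq, mul_pow, sq_sqrt zero_le_two]
    ring_nf
  calc erfi z * ∫ x in Iic (-(√2 * z)), Φ x < erfi z * φ (-(√2 * z)) :=
        mul_lt_mul_of_pos_left (integral_Iic_stdNormalCDF_lt (neg_neg_of_pos (by positivity)))
          (erfi_pos hz)
    _ ≤ exp (z ^ 2) * φ (-(√2 * z)) :=
        mul_le_mul_of_nonneg_right (erfi_le_exp_sq hz.le) (gaussianPDFReal_nonneg 0 1 _)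
    _ = (√(2 * π))⁻¹ := by
        rw [hφ, mul_left_comm, ← exp_add]
        simp

/-- **Lemma E.3 (soft-thresholding beats the parameter-free baseline)**: for
`ε ∈ (0, √(2/π)]`, if `γ` satisfies `∫_{−∞}^{ε−γ} Φ(x) dx = ε/2` and `y > 0` satisfies
`erfi(y) = √2/(√π ε)`, then `γ − ε < √2 y`. Moreover, the key inequality
`erfi(z) · ∫_{−∞}^{−√2 z} Φ(x) dx < √(2/π)` holds for all `z > 0`. -/
theorem soft_thresholding_beats_baseline
    (ε : ℝ) (hε : ε ∈ Set.Ioc 0 (Real.sqrt (2 / Real.pi)))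
    (γ : ℝ) (hγ : (∫ x in Set.Iic (ε - γ), stdNormalCDF x) = ε / 2)
    (y : ℝ) (hy : 0 < y)
    (herfi : erfi y = Real.sqrt 2 / (Real.sqrt Real.pi * ε)) :
    γ - ε < Real.sqrt 2 * y ∧
      ∀ z : ℝ, 0 < z →
        erfi z * (∫ x in Set.Iic (-(Real.sqrt 2 * z)), stdNormalCDF x) <
          Real.sqrt (2 / Real.pi) := by
  have hε₀ : 0 < ε := hε.1
  have h2π : √(2 * π) = √2 * √π := sqrt_mul zero_le_two π
  have hsqrt2 : √2 ^ 2 = 2 := sq_sqrt zero_le_two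
  refine ⟨?_, fun z hz => (erfi_mul_integral_Iic_stdNormalCDF_lt hz).trans ?_⟩
  · by_contra! hge
    have hmono : ε / 2 ≤ ∫ x in Iic (-(√2 * y)), Φ x :=
      hγ ▸ monotone_integral_Iic_stdNormalCDF (show ε - γ ≤ -(√2 * y) by linarith)
    have hbase : (√(2 * π))⁻¹ = erfi y * (ε / 2) := by
      rw [herfi, h2π]
      field_simp
      linear_combination -hsqrt2
    exact (erfi_mul_integral_Iic_stdNormalCDF_lt hy).not_ge
      (hbase ▸ mul_le_mul_of_nonneg_left hmono (erfi_pos hy).le)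
  · have hsqrt : √(2 / π) = 2 * (√(2 * π))⁻¹ := by
      rw [sqrt_div zero_le_two, h2π]
      field_simp
      linear_combination hsqrt2
    rw [hsqrt]
    linarith [inv_pos.2 (sqrt_pos.2 (mul_pos two_pos pi_pos))]
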